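/- A ≤^⊕ₑ B holds if and only if A₁ ≤^⊕ B₁, where A = A₁ + A₂ and B = B₁ + B₂ are the core-EP decompositions of A and B. -/

import Mathlib

/-!
If `A = A₁ + A₂` is the core-EP decomposition, the core-EP inverse of `A` is the core inverse
`X = A₁^# A₁ A₁†` of `A₁`, and `X` annihilates `A₂` on both sides. So both orders test the same
matrix `X` against `A` and `B`, and they agree as soon as `X` also annihilates `B₂`, which holds
once `range A₁ ⊆ range B₁` (because `B₁ᴴ B₂ = 0` and `B₂ B₁ = 0`). Under either order this
inclusion comes from `A₁ = (A₁ X) A₁`: for the core order `A₁ X = B₁ X` gives it directly; for the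
core-EP order `A₁ X = A X = B X` gives `A₁ = B A₁ Z`, and iterating up to `B^l`, whose range lies
in `range B₁` since `B₂^l = 0`, gives it again.
-/


open Matrix

namespace CoreEP

variable {I : Type*} [Fintype I] [DecidableEq I]

/-- `X` is the Moore-Penrose inverse of `A` (four Penrose equations). -/
def IsMPInv (A X : Matrix I I ℂ) : Prop :=
  A * X * A = A ∧ X * A * X = X ∧ (A * X)ᴴ = A * X ∧ (X * A)ᴴ = X * A

/-- The column space of `X` is contained in the column space of `A`. -/
def rangeLE (X A : Matrix I I ℂ) : Prop :=
  LinearMap.range X.mulVecLin ≤ LinearMap.range A.mulVecLin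

/-- `A` is group-invertible (index at most one): `rank (A²) = rank A`. -/
def GroupInvertible (A : Matrix I I ℂ) : Prop :=
  (A ^ 2).rank = A.rank

/-- `X` is the core inverse of `A`: `A X = A A†` and `range X ⊆ range A`. -/
def IsCoreInv (A X : Matrix I I ℂ) : Prop :=
  (∃ D, IsMPInv A D ∧ A * X = A * D) ∧ rangeLE X A

/-- `X` is the core-EP inverse of `A` with index `k`. -/
def IsCoreEPInv (A X : Matrix I I ℂ) (k : ℕ) : Prop :=
  X * A ^ (k + 1) = A ^ k ∧ X * A * X = X ∧ (A * X)ᴴ = A * X ∧ rangeLE X (A ^ k)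

/-- `k` is the index of `A`: the smallest `k` with `rank A^(k+1) = rank A^k`. -/
def HasIndex (A : Matrix I I ℂ) (k : ℕ) : Prop :=
  (A ^ (k + 1)).rank = (A ^ k).rank ∧ ∀ j, (A ^ (j + 1)).rank = (A ^ j).rank → k ≤ j

/-- `A = A₁ + A₂` is a core-EP decomposition with nilpotency exponent `k`. -/
def IsCoreEPDecomp (A A₁ A₂ : Matrix I I ℂ) (k : ℕ) : Prop :=
  A = A₁ + A₂ ∧ GroupInvertible A₁ ∧ A₂ ^ k = 0 ∧ A₁ᴴ * A₂ = 0 ∧ A₂ * A₁ = 0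

/-- The core-EP (pre-)order: `A^⊕ₑ A = A^⊕ₑ B` and `A A^⊕ₑ = B A^⊕ₑ`. -/
def CoreEPLE (A B : Matrix I I ℂ) : Prop :=
  ∃ k X, HasIndex A k ∧ IsCoreEPInv A X k ∧ X * A = X * B ∧ A * X = B * X

/-- The core partial order on group-invertible matrices. -/
def CoreLE (A B : Matrix I I ℂ) : Prop :=
  GroupInvertible A ∧ GroupInvertible B ∧ ∃ X, IsCoreInv A X ∧ X * A = X * B ∧ A * X = B * X

/-- The minus partial order: `rank (B - A) = rank B - rank A`. -/
def MinusLE (A B : Matrix I I ℂ) : Prop :=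
  (B - A).rank + A.rank = B.rank

/-- The core-minus order: core order on the group-invertible parts and
minus order on the nilpotent parts of the core-EP decompositions. -/
def CMLE (A B : Matrix I I ℂ) : Prop :=
  ∃ k l A₁ A₂ B₁ B₂, HasIndex A k ∧ HasIndex B l ∧
    IsCoreEPDecomp A A₁ A₂ k ∧ IsCoreEPDecomp B B₁ B₂ l ∧
    CoreLE A₁ B₁ ∧ MinusLE A₂ B₂

end CoreEP

open scoped ComplexOrder

namespace CoreEP

section Algebra

variable {M : Type*} [Monoid M]

/-- The group inverse `a^#` of `a`. -/
structure IsGroupInverse (a g : M) : Prop where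
  comm : a * g = g * a
  mul_inv_mul : a * g * a = a
  inv_mul_inv : g * a * g = g

namespace IsGroupInverse

variable {a g : M}

theorem mul_self_mul_inv (h : IsGroupInverse a g) : a * a * g = a := by
  rw [mul_assoc, h.comm, ← mul_assoc, h.mul_inv_mul]

theorem inv_mul_mul_self (h : IsGroupInverse a g) : g * a * a = a := by
  rw [← h.comm, h.mul_inv_mul]

theorem pow_succ_mul_pow (h : IsGroupInverse a g) (m : ℕ) : a ^ (m + 1) * g ^ m = a := by
  induction m with
  | zero => simp
  | succ m ih =>
    calc a ^ (m + 2) * g ^ (m + 1) = a ^ m * (a * a * g) * g ^ m := by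
          rw [pow_succ' g, pow_add, pow_two]; simp only [mul_assoc]
      _ = a := by rw [h.mul_self_mul_inv, ← pow_succ, ih]

theorem unique {g' : M} (h : IsGroupInverse a g) (h' : IsGroupInverse a g') : g = g' := by
  have hproj : a * g = a * g' :=
    calc a * g = g * (a * g' * a) := by rw [h'.mul_inv_mul, h.comm]
      _ = g * a * (g' * a) := by simp only [mul_assoc]
      _ = a * g * (a * g') := by rw [h.comm, h'.comm]
      _ = a * g' := by rw [← mul_assoc, h.mul_inv_mul]
  calc g = g * (a * g) := by rw [← mul_assoc, h.inv_mul_inv]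
    _ = g * a * g' := by rw [hproj, ← mul_assoc]
    _ = g' * a * g' := by rw [← h.comm, hproj, h'.comm]
    _ = g' := h'.inv_mul_inv

theorem mul_inv_mul_mul (h : IsGroupInverse a g) (d : M) : a * (g * a * d) = a * d := by
  rw [← mul_assoc, ← mul_assoc, h.mul_inv_mul]

theorem inv_mul_mul_eq (h : IsGroupInverse a g) (d : M) : g * a * d = a * (g * d) := by
  rw [← h.comm, mul_assoc]

theorem star [StarMul M] (h : IsGroupInverse a g) : IsGroupInverse (star a) (star g) where
  comm := by rw [← star_mul, ← star_mul, h.comm]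
  mul_inv_mul := by rw [← star_mul, ← star_mul, ← mul_assoc, h.mul_inv_mul]
  inv_mul_inv := by rw [← star_mul, ← star_mul, ← mul_assoc, h.inv_mul_inv]

end IsGroupInverse

theorem isGroupInverse_of_eq_mul_mul {a c c' : M} (h : a = a * a * c) (h' : a = c' * a * a) :
    IsGroupInverse a (c' * a * c) := by
  have hcomm : c' * a = a * c := by
    calc c' * a = c' * (a * a * c) := by rw [← h]
      _ = a * c := by rw [← mul_assoc, ← mul_assoc, ← h']
  have haca : a * c * a = a := by rw [← hcomm, ← h']
  have hag : a * (c' * a * c) = a * c := by rw [hcomm, ← mul_assoc, ← mul_assoc, ← h]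
  have hga : c' * a * c * a = a * c := by
    rw [mul_assoc, mul_assoc, ← mul_assoc a, haca, hcomm]
  refine ⟨hag.trans hga.symm, by rw [hag, haca], ?_⟩
  rw [hga, hcomm]
  simp only [← mul_assoc]
  rw [haca]

theorem eq_pow_mul_mul_pow {v x z : M} (h : v = x * v * z) (m : ℕ) : v = x ^ m * v * z ^ m := by
  induction m with
  | zero => simp
  | succ m ih =>
    calc v = x ^ m * (x * v * z) * z ^ m := by rw [← h, ← ih]
      _ = x ^ (m + 1) * v * z ^ (m + 1) := by rw [pow_succ, pow_succ']; simp only [mul_assoc]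

variable {R : Type*} [Semiring R] {a b : R}

theorem exists_add_pow_eq_mul_add_pow (h : b * a = 0) (m : ℕ) :
    ∃ c, (a + b) ^ m = a * c + b ^ m := by
  induction m with
  | zero => exact ⟨0, by simp⟩
  | succ m ih =>
    obtain ⟨c, hc⟩ := ih
    refine ⟨(a + b) ^ m, ?_⟩
    rw [pow_succ', hc, pow_succ', add_mul, mul_add b, ← mul_assoc b a, h, zero_mul, zero_add, ← hc]

theorem add_pow_mul_eq_pow_succ (h : b * a = 0) (m : ℕ) : (a + b) ^ m * a = a ^ (m + 1) := by
  induction m with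
  | zero => simp
  | succ m ih =>
    calc (a + b) ^ (m + 1) * a = (a + b) * a ^ (m + 1) := by rw [pow_succ', mul_assoc, ih]
      _ = a ^ (m + 2) := by rw [add_mul, pow_succ' a m, ← mul_assoc b, h, zero_mul, add_zero,
          ← pow_succ', ← pow_succ']

end Algebra

variable {I : Type*} [Fintype I]

theorem exists_eq_mul_of_rangeLE [DecidableEq I] {X A : Matrix I I ℂ} (h : rangeLE X A) :
    ∃ C, X = A * C := by
  obtain ⟨g, hg⟩ := Module.projective_lifting_property A.mulVecLin.rangeRestrict
    (X.mulVecLin.codRestrict _ fun v => h ⟨v, rfl⟩) A.mulVecLin.surjective_rangeRestrict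
  refine ⟨LinearMap.toMatrix' g, Matrix.toLin'.injective ?_⟩
  rw [Matrix.toLin'_mul, Matrix.toLin'_toMatrix']
  refine LinearMap.ext fun v => ?_
  simpa using congrArg Subtype.val (LinearMap.congr_fun hg v).symm

theorem rangeLE_mul (A C : Matrix I I ℂ) : rangeLE (A * C) A := by
  rw [rangeLE, Matrix.mulVecLin_mul]
  exact LinearMap.range_comp_le_range _ _

theorem exists_eq_mul_mul_of_rank_mul_eq [DecidableEq I] {A C : Matrix I I ℂ}
    (h : (A * C).rank = A.rank) : ∃ W, A = A * C * W :=
  exists_eq_mul_of_rangeLE (Submodule.eq_of_le_of_finrank_le (rangeLE_mul A C) h.ge).ge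

theorem exists_isGroupInverse [DecidableEq I] {A : Matrix I I ℂ} (hA : GroupInvertible A) :
    ∃ G, IsGroupInverse A G := by
  rw [GroupInvertible, pow_two] at hA
  obtain ⟨C, hC⟩ := exists_eq_mul_mul_of_rank_mul_eq hA
  obtain ⟨C', hC'⟩ := exists_eq_mul_mul_of_rank_mul_eq (A := Aᴴ) (C := Aᴴ) (by
    rw [← conjTranspose_mul, rank_conjTranspose, rank_conjTranspose, hA])
  refine ⟨_, isGroupInverse_of_eq_mul_mul hC (c' := C'ᴴ) ?_⟩
  simpa only [conjTranspose_mul, conjTranspose_conjTranspose, mul_assoc]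
    using congrArg conjTranspose hC'

namespace IsMPInv

theorem unique {A D D' : Matrix I I ℂ} (h : IsMPInv A D) (h' : IsMPInv A D') : D = D' := by
  obtain ⟨a1, b1, c1, d1⟩ := h
  obtain ⟨a2, b2, c2, d2⟩ := h'
  have hAD : A * D = A * D' := by
    calc A * D = (A * D' * (A * D))ᴴ := by rw [← mul_assoc, a2, c1]
      _ = A * D * (A * D') := by rw [conjTranspose_mul, c1, c2]
      _ = A * D' := by rw [← mul_assoc, a1]
  have hDA : D * A = D' * A := by
    calc D * A = (D * A * (D' * A))ᴴ := by rw [mul_assoc, ← mul_assoc A, a2, d1]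
      _ = D' * A * (D * A) := by rw [conjTranspose_mul, d1, d2]
      _ = D' * A := by rw [mul_assoc, ← mul_assoc A, a1]
  calc D = D * A * D := b1.symm
    _ = D' * A * D' := by rw [hDA, mul_assoc, hAD, ← mul_assoc]
    _ = D' := b2

theorem mul_eq_zero_of_conjTranspose_mul_eq_zero {A D Z : Matrix I I ℂ} (hD : IsMPInv A D)
    (h : Aᴴ * Z = 0) : D * Z = 0 := by
  have hfac : D = D * Dᴴ * Aᴴ := by
    rw [mul_assoc, ← conjTranspose_mul, hD.2.2.1, ← mul_assoc, hD.2.1]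
  rw [hfac, mul_assoc, h, mul_zero]

end IsMPInv

/-- `A† = (AᴴA)^# Aᴴ`; the group inverse of the Hermitian matrix `AᴴA` is Hermitian by
uniqueness. -/
theorem exists_isMPInv [DecidableEq I] (A : Matrix I I ℂ) : ∃ D, IsMPInv A D := by
  have hH : (Aᴴ * A)ᴴ = Aᴴ * A := by rw [conjTranspose_mul, conjTranspose_conjTranspose]
  obtain ⟨G, hG⟩ := exists_isGroupInverse (A := Aᴴ * A) (by
    rw [GroupInvertible, pow_two, ← rank_conjTranspose_mul_self (Aᴴ * A), hH])
  have hGH : Gᴴ = G := by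
    have := hG.star
    rw [star_eq_conjTranspose, hH] at this
    exact this.unique hG
  obtain ⟨W, hW⟩ := exists_eq_mul_mul_of_rank_mul_eq (A := Aᴴ) (C := A) (by
    rw [rank_conjTranspose_mul_self, rank_conjTranspose])
  have hA : A = Wᴴ * (Aᴴ * A) := by
    simpa only [conjTranspose_mul, conjTranspose_conjTranspose, mul_assoc]
      using congrArg conjTranspose hW
  have hAGAA : A * (G * (Aᴴ * A)) = A :=
    calc A * (G * (Aᴴ * A)) = Wᴴ * (Aᴴ * A) * (G * (Aᴴ * A)) := by rw [← hA]
      _ = Wᴴ * (Aᴴ * A * G * (Aᴴ * A)) := by simp only [mul_assoc]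
      _ = A := by rw [hG.mul_inv_mul, ← hA]
  refine ⟨G * Aᴴ, ?_, ?_, ?_, ?_⟩
  · simpa only [mul_assoc] using hAGAA
  · simpa only [mul_assoc] using congrArg (· * Aᴴ) hG.inv_mul_inv
  · rw [conjTranspose_mul, conjTranspose_mul, hGH, conjTranspose_conjTranspose, mul_assoc]
  · rw [conjTranspose_mul, conjTranspose_mul, hGH, conjTranspose_conjTranspose, mul_assoc,
      ← hG.comm, mul_assoc]

theorem isCoreInv_groupInverse_mul_mul [DecidableEq I] {A G D : Matrix I I ℂ}
    (hG : IsGroupInverse A G) (hD : IsMPInv A D) : IsCoreInv A (G * A * D) :=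
  ⟨⟨D, hD, hG.mul_inv_mul_mul D⟩, hG.inv_mul_mul_eq D ▸ rangeLE_mul _ _⟩

theorem IsCoreInv.eq_groupInverse_mul_mul [DecidableEq I] {A G D X : Matrix I I ℂ}
    (hG : IsGroupInverse A G) (hD : IsMPInv A D) (hX : IsCoreInv A X) : X = G * A * D := by
  obtain ⟨⟨D', hD', hXD'⟩, hXA⟩ := hX
  obtain ⟨Z, rfl⟩ := exists_eq_mul_of_rangeLE hXA
  rw [hD'.unique hD] at hXD'
  calc A * Z = G * A * A * Z := by rw [hG.inv_mul_mul_self]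
    _ = G * A * D := by simp only [mul_assoc]; rw [hXD']

theorem IsCoreInv.unique [DecidableEq I] {A X Y : Matrix I I ℂ} (hA : GroupInvertible A)
    (hX : IsCoreInv A X) (hY : IsCoreInv A Y) : X = Y := by
  obtain ⟨G, hG⟩ := exists_isGroupInverse hA
  obtain ⟨D, hD⟩ := exists_isMPInv A
  rw [hX.eq_groupInverse_mul_mul hG hD, hY.eq_groupInverse_mul_mul hG hD]

theorem coreLE_iff [DecidableEq I] {A B X : Matrix I I ℂ} (hA : GroupInvertible A)
    (hB : GroupInvertible B) (hX : IsCoreInv A X) :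
    CoreLE A B ↔ X * A = X * B ∧ A * X = B * X := by
  refine ⟨fun ⟨_, _, Y, hY, h⟩ => ?_, fun h => ⟨hA, hB, X, hX, h⟩⟩
  rwa [hY.unique hA hX] at h

theorem HasIndex.unique [DecidableEq I] {A : Matrix I I ℂ} {k k' : ℕ} (h : HasIndex A k)
    (h' : HasIndex A k') : k = k' :=
  le_antisymm (h.2 k' h'.1) (h'.2 k h.1)

theorem IsCoreEPInv.mul_mul_mul_eq [DecidableEq I] {A X Y : Matrix I I ℂ} {k : ℕ}
    (hY : IsCoreEPInv A Y k) (hX : rangeLE X (A ^ k)) : A * Y * (A * X) = A * X := by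
  obtain ⟨C, rfl⟩ := exists_eq_mul_of_rangeLE hX
  calc A * Y * (A * (A ^ k * C)) = A * (Y * A ^ (k + 1)) * C := by
        rw [pow_succ']; simp only [mul_assoc]
    _ = A * (A ^ k * C) := by rw [hY.1, mul_assoc]

theorem IsCoreEPInv.unique [DecidableEq I] {A X Y : Matrix I I ℂ} {k : ℕ}
    (hX : IsCoreEPInv A X k) (hY : IsCoreEPInv A Y k) : X = Y := by
  have hAX : A * X = A * Y := by
    have h := congrArg conjTranspose (hY.mul_mul_mul_eq hX.2.2.2)
    rw [conjTranspose_mul, hX.2.2.1, hY.2.2.1] at h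
    rw [← h, hX.mul_mul_mul_eq hY.2.2.2]
  obtain ⟨C, rfl⟩ := exists_eq_mul_of_rangeLE hY.2.2.2
  calc X = X * (A * X) := by rw [← mul_assoc, hX.2.1]
    _ = X * A ^ (k + 1) * C := by rw [hAX, pow_succ']; simp only [mul_assoc]
    _ = A ^ k * C := by rw [hX.1]

theorem coreEPLE_iff [DecidableEq I] {A B X : Matrix I I ℂ} {k : ℕ} (hk : HasIndex A k)
    (hX : IsCoreEPInv A X k) : CoreEPLE A B ↔ X * A = X * B ∧ A * X = B * X := by
  refine ⟨fun ⟨k', Y, hk', hY, h⟩ => ?_, fun h => ⟨k, X, hk, hX, h⟩⟩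
  obtain rfl := hk.unique hk'
  rwa [hY.unique hX] at h

theorem groupInverse_mul_mul_mul_add_eq [DecidableEq I] {A B₁ B₂ G D : Matrix I I ℂ}
    (hG : IsGroupInverse A G) (hD : IsMPInv A D) (hAB : rangeLE A B₁)
    (h₁₂ : B₁ᴴ * B₂ = 0) (h₂₁ : B₂ * B₁ = 0) :
    G * A * D * (B₁ + B₂) = G * A * D * B₁ ∧ (B₁ + B₂) * (G * A * D) = B₁ * (G * A * D) := by
  obtain ⟨W, hW⟩ := exists_eq_mul_of_rangeLE hAB
  have hDB : D * B₂ = 0 := hD.mul_eq_zero_of_conjTranspose_mul_eq_zero (by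
    rw [hW, conjTranspose_mul, mul_assoc, h₁₂, mul_zero])
  have hBA : B₂ * A = 0 := by rw [hW, ← mul_assoc, h₂₁, zero_mul]
  constructor
  · rw [mul_add, mul_assoc _ D B₂, hDB, mul_zero, add_zero]
  · rw [add_mul, hG.inv_mul_mul_eq, ← mul_assoc B₂, hBA, zero_mul, add_zero]

theorem isCoreEPInv_add [DecidableEq I] {A₁ A₂ G D : Matrix I I ℂ} {k : ℕ}
    (hG : IsGroupInverse A₁ G) (hD : IsMPInv A₁ D) (h₁₂ : A₁ᴴ * A₂ = 0) (h₂₁ : A₂ * A₁ = 0)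
    (hk : A₂ ^ k = 0) : IsCoreEPInv (A₁ + A₂) (G * A₁ * D) k := by
  obtain ⟨hXA, hAX⟩ := groupInverse_mul_mul_mul_add_eq hG hD (B₁ := A₁) le_rfl h₁₂ h₂₁
  have hXA' : G * A₁ * D * (A₁ + A₂) = G * A₁ := by rw [hXA, mul_assoc G, mul_assoc G, hD.1]
  obtain ⟨C, hC⟩ := exists_add_pow_eq_mul_add_pow h₂₁ k
  rw [hk, add_zero] at hC
  have hA₁ : A₁ = (A₁ + A₂) ^ k * (A₁ * G ^ k) := by
    rw [← mul_assoc, add_pow_mul_eq_pow_succ h₂₁, hG.pow_succ_mul_pow]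
  refine ⟨?_, ?_, ?_, ?_⟩
  · rw [pow_succ', ← mul_assoc, hXA', hC, ← mul_assoc, hG.inv_mul_mul_self]
  · rw [hXA', ← mul_assoc, ← mul_assoc, hG.inv_mul_inv]
  · rw [hAX, hG.mul_inv_mul_mul]
    exact hD.2.2.1
  · have hX : G * A₁ * D = (A₁ + A₂) ^ k * (A₁ * G ^ k * (G * D)) := by
      rw [← mul_assoc, ← hA₁, hG.inv_mul_mul_eq]
    exact hX ▸ rangeLE_mul _ _

theorem rangeLE_of_eq_add_mul_mul [DecidableEq I] {B₁ B₂ V Z : Matrix I I ℂ} {l : ℕ}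
    (h₂₁ : B₂ * B₁ = 0) (hl : B₂ ^ l = 0) (h : V = (B₁ + B₂) * V * Z) : rangeLE V B₁ := by
  obtain ⟨C, hC⟩ := exists_add_pow_eq_mul_add_pow h₂₁ l
  rw [eq_pow_mul_mul_pow h l, hC, hl, add_zero, mul_assoc, mul_assoc]
  exact rangeLE_mul _ _

theorem coreEP_order_iff_core_order_of_parts_general {n : ℕ}
    (A B A₁ A₂ B₁ B₂ : Matrix (Fin n) (Fin n) ℂ) (k l : ℕ)
    (hkA : HasIndex A k)
    (hA : IsCoreEPDecomp A A₁ A₂ k) (hB : IsCoreEPDecomp B B₁ B₂ l) :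
    CoreEPLE A B ↔ CoreLE A₁ B₁ := by
  obtain ⟨rfl, hA₁, hA₂, hA₁₂, hA₂₁⟩ := hA
  obtain ⟨rfl, hB₁, hB₂, hB₁₂, hB₂₁⟩ := hB
  obtain ⟨G, hG⟩ := exists_isGroupInverse hA₁
  obtain ⟨D, hD⟩ := exists_isMPInv A₁
  rw [coreEPLE_iff hkA (isCoreEPInv_add hG hD hA₁₂ hA₂₁ hA₂),
    coreLE_iff hA₁ hB₁ (isCoreInv_groupInverse_mul_mul hG hD)]
  obtain ⟨hXA, hAX⟩ := groupInverse_mul_mul_mul_add_eq hG hD (B₁ := A₁) le_rfl hA₁₂ hA₂₁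
  have hA₁XA₁ : A₁ * (G * A₁ * D) * A₁ = A₁ := by rw [hG.mul_inv_mul_mul, hD.1]
  constructor
  · rintro ⟨h₁, h₂⟩
    have hAB : rangeLE A₁ B₁ := rangeLE_of_eq_add_mul_mul hB₂₁ hB₂ <|
      calc A₁ = (A₁ + A₂) * (G * A₁ * D) * A₁ := by rw [hAX, hA₁XA₁]
        _ = (B₁ + B₂) * (A₁ * (G * D)) * A₁ := by rw [h₂, hG.inv_mul_mul_eq]
        _ = (B₁ + B₂) * A₁ * (G * D * A₁) := by simp only [mul_assoc]
    obtain ⟨hXB, hBX⟩ := groupInverse_mul_mul_mul_add_eq hG hD hAB hB₁₂ hB₂₁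
    exact ⟨by rw [← hXA, h₁, hXB], by rw [← hAX, h₂, hBX]⟩
  · rintro ⟨h₁, h₂⟩
    have hAB : rangeLE A₁ B₁ := by
      rw [← hA₁XA₁, h₂, mul_assoc]
      exact rangeLE_mul _ _
    obtain ⟨hXB, hBX⟩ := groupInverse_mul_mul_mul_add_eq hG hD hAB hB₁₂ hB₂₁
    exact ⟨by rw [hXA, h₁, hXB], by rw [hAX, h₂, hBX]⟩

/-- `A ≤^⊕ₑ B` iff `A₁ ≤^⊕ B₁` for the core-EP decompositions
`A = A₁ + A₂`, `B = B₁ + B₂`. -/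
theorem coreEP_order_iff_core_order_of_parts {n : ℕ}
    (A B A₁ A₂ B₁ B₂ : Matrix (Fin n) (Fin n) ℂ) (k l : ℕ)
    (hkA : HasIndex A k) (hlB : HasIndex B l)
    (hA : IsCoreEPDecomp A A₁ A₂ k) (hB : IsCoreEPDecomp B B₁ B₂ l) :
    CoreEPLE A B ↔ CoreLE A₁ B₁ :=
  coreEP_order_iff_core_order_of_parts_general A B A₁ A₂ B₁ B₂ k l hkA hA hB

end CoreEP
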